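/- Let M be a compact metric space, let μ and μ_j (j ∈ ℕ) be finite Borel measures on M, and assume μ_j → μ weakly, i.e. ∫ f dμ_j → ∫ f dμ for every bounded continuous f : M → ℝ. Let E ⊆ M be a Borel set which is 'quasi-compact with uniformly small exceptional sets' in the following sense: for every ε > 0 there exist a compact set K ⊆ M and Borel sets G, G' ⊆ M with E ⊆ K ∪ G, K ⊆ E ∪ G', μ_j(G) ≤ ε for every j, and μ(G') ≤ ε. Then limsup_{j→∞} μ_j(E) ≤ μ(E). -/

import Mathlib

open Filter Topology MeasureTheory
open scoped ENNReal NNReal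

/-! With `E ⊆ K ∪ G` and `K ⊆ E ∪ G'`,
`limsup μ_j(E) ≤ limsup μ_j(K) + ε ≤ μ(K) + ε ≤ μ(E) + 2ε`: the middle step is the classical
portmanteau inequality for the closed set `K`, the outer ones only need the exceptional sets to
be small uniformly in `j`. -/

section

variable {Ω ι : Type*} [MeasurableSpace Ω]

lemma measure_le_add_of_subset_union {μ : Measure Ω} {s t u : Set Ω} {c : ℝ≥0∞}
    (hs : s ⊆ t ∪ u) (hu : μ u ≤ c) : μ s ≤ μ t + c :=
  calc μ s ≤ μ (t ∪ u) := measure_mono hs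
    _ ≤ μ t + μ u := measure_union_le t u
    _ ≤ μ t + c := add_le_add_right hu _

lemma limsup_measure_le_add_of_subset_union {L : Filter ι} [L.NeBot] {μs : ι → Measure Ω}
    {s t u : Set Ω} {c : ℝ≥0∞} (hs : s ⊆ t ∪ u) (hu : ∀ i, μs i u ≤ c) :
    limsup (fun i => μs i s) L ≤ limsup (fun i => μs i t) L + c :=
  calc limsup (fun i => μs i s) L ≤ limsup (fun i => μs i t + c) L :=
        limsup_le_limsup (Eventually.of_forall fun i => measure_le_add_of_subset_union hs (hu i))
    _ = limsup (fun i => μs i t) L + c :=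
        limsup_add_const L _ c (by isBoundedDefault) (by isBoundedDefault)

lemma limsup_measure_le_of_forall_isClosed [TopologicalSpace Ω] {L : Filter ι} [L.NeBot]
    {μ : Measure Ω} {μs : ι → Measure Ω}
    (hclosed : ∀ F, IsClosed F → limsup (fun i => μs i F) L ≤ μ F) {E : Set Ω}
    (hE : ∀ ε : ℝ≥0, 0 < ε → ∃ K G G' : Set Ω,
      IsClosed K ∧ E ⊆ K ∪ G ∧ K ⊆ E ∪ G' ∧ (∀ i, μs i G ≤ ε) ∧ μ G' ≤ ε) :
    limsup (fun i => μs i E) L ≤ μ E := by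
  refine ENNReal.le_of_forall_pos_le_add fun ε hε _ => ?_
  obtain ⟨K, G, G', hK, hEKG, hKEG', hG, hG'⟩ := hE (ε / 2) (half_pos hε)
  rw [ENNReal.coe_div two_ne_zero, ENNReal.coe_ofNat] at hG hG'
  calc limsup (fun i => μs i E) L ≤ limsup (fun i => μs i K) L + ε / 2 :=
        limsup_measure_le_add_of_subset_union hEKG hG
    _ ≤ μ K + ε / 2 := by gcongr; exact hclosed K hK
    _ ≤ μ E + ε / 2 + ε / 2 := by gcongr; exact measure_le_add_of_subset_union hKEG' hG'
    _ = μ E + ε := by rw [add_assoc, ENNReal.add_halves]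

end

theorem limsup_le_measure_of_quasiCompact_general {M : Type*} [MetricSpace M]
    [MeasurableSpace M] [BorelSpace M]
    (μ : Measure M) (μs : ℕ → Measure M)
    [IsFiniteMeasure μ] [∀ j, IsFiniteMeasure (μs j)]
    (hweak : ∀ f : BoundedContinuousFunction M ℝ,
      Tendsto (fun j => ∫ x, f x ∂(μs j)) atTop (𝓝 (∫ x, f x ∂μ)))
    (E : Set M)
    (hquasi : ∀ ε : ℝ, 0 < ε → ∃ K G G' : Set M,
      IsCompact K ∧ MeasurableSet G ∧ MeasurableSet G' ∧
      E ⊆ K ∪ G ∧ K ⊆ E ∪ G' ∧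
      (∀ j, μs j G ≤ ENNReal.ofReal ε) ∧ μ G' ≤ ENNReal.ofReal ε) :
    limsup (fun j => μs j E) atTop ≤ μ E := by
  have hlim : Tendsto (β := FiniteMeasure M) (fun j => ⟨μs j, inferInstance⟩) atTop
      (𝓝 ⟨μ, inferInstance⟩) :=
    FiniteMeasure.tendsto_iff_forall_integral_tendsto.mpr hweak
  refine limsup_measure_le_of_forall_isClosed
    (fun F hF => FiniteMeasure.limsup_measure_closed_le_of_tendsto hlim hF) fun ε hε => ?_
  obtain ⟨K, G, G', hK, -, -, hEKG, hKEG', hG, hG'⟩ := hquasi ε hε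
  rw [ENNReal.ofReal_coe_nnreal] at hG hG'
  exact ⟨K, G, G', hK.isClosed, hEKG, hKEG', hG, hG'⟩

/-- **Portmanteau inequality for quasi-compact sets.** If finite Borel measures `μ j`
converge weakly to `μ` on a compact metric space, and `E` is quasi-compact with
uniformly small exceptional sets, then `limsup_j (μ j) E ≤ μ E`. -/
theorem limsup_le_measure_of_quasiCompact {M : Type*} [MetricSpace M] [CompactSpace M]
    [MeasurableSpace M] [BorelSpace M]
    (μ : Measure M) (μs : ℕ → Measure M)
    [IsFiniteMeasure μ] [∀ j, IsFiniteMeasure (μs j)]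
    (hweak : ∀ f : BoundedContinuousFunction M ℝ,
      Tendsto (fun j => ∫ x, f x ∂(μs j)) atTop (𝓝 (∫ x, f x ∂μ)))
    (E : Set M) (hE : MeasurableSet E)
    (hquasi : ∀ ε : ℝ, 0 < ε → ∃ K G G' : Set M,
      IsCompact K ∧ MeasurableSet G ∧ MeasurableSet G' ∧
      E ⊆ K ∪ G ∧ K ⊆ E ∪ G' ∧
      (∀ j, μs j G ≤ ENNReal.ofReal ε) ∧ μ G' ≤ ENNReal.ofReal ε) :
    limsup (fun j => μs j E) atTop ≤ μ E :=
  limsup_le_measure_of_quasiCompact_general μ μs hweak E hquasi
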